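/- Let n ≥ 2, let Ξ = T_{V₊} ∩ S^n_ℂ, let ∂Ξ = closure(Ξ) \ Ξ be its boundary in S^n_ℂ, let dS^n = S^n_ℂ ∩ iV (de Sitter space), and set ξ⁰ = e₀ + i e_n. Then ∂Ξ is the disjoint union of dS^n and the orbit 𝒪 = G^c·(ξ⁰ + e_{n−1}); moreover G^c acts transitively on dS^n, namely dS^n = G^c·e_{n−1}, and G^c acts transitively on the forward light rays: L^n₊ = G^c·ξ⁰. (Paper: Lemma 3.7 together with equation (eq:conic).) -/

import Mathlib

open MeasureTheory

noncomputable section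

/-- Standard complex bilinear form on ℂ^{n+1}. -/
def dotC (n : ℕ) (z w : Fin (n+1) → ℂ) : ℂ := ∑ j, z j * w j

/-- The real form V = ℝe₀ ⊕ iℝⁿ. -/
def memV (n : ℕ) (z : Fin (n+1) → ℂ) : Prop :=
  (z 0).im = 0 ∧ ∀ j, j ≠ 0 → (z j).re = 0

/-- The open forward light cone V₊ ⊆ V. -/
def memVplus (n : ℕ) (z : Fin (n+1) → ℂ) : Prop :=
  memV n z ∧ 0 < (z 0).re ∧ 0 < (dotC n z z).re

/-- The tube domain T_{V₊} = V₊ + iV. -/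
def memTV (n : ℕ) (z : Fin (n+1) → ℂ) : Prop :=
  ∃ x y, memVplus n x ∧ memV n y ∧ z = x + Complex.I • y

/-- The crown Ξ = T_{V₊} ∩ S^n_ℂ. -/
def memXi (n : ℕ) (z : Fin (n+1) → ℂ) : Prop :=
  memTV n z ∧ dotC n z z = 1

/-- The forward light rays L^n₊. -/
def memLn (n : ℕ) (v : Fin (n+1) → ℂ) : Prop :=
  memV n v ∧ dotC n v v = 0 ∧ 0 < (v 0).re

/-- The hyperboloid H^n_V ⊆ V. -/
def memHn (n : ℕ) (u : Fin (n+1) → ℂ) : Prop :=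
  memV n u ∧ 0 < (u 0).re ∧ dotC n u u = 1

/-- The conjugation σ_V fixing V pointwise. -/
def sigmaV (n : ℕ) (z : Fin (n+1) → ℂ) : Fin (n+1) → ℂ :=
  fun j => if j = 0 then (starRingEnd ℂ) (z j) else -((starRingEnd ℂ) (z j))

/-- The conjugation σ_E fixing ℝ^{n+1} pointwise. -/
def sigmaE (n : ℕ) (z : Fin (n+1) → ℂ) : Fin (n+1) → ℂ := fun j => (starRingEnd ℂ) (z j)

/-- Standard basis vectors of ℂ^{n+1}. -/
def stdC (n : ℕ) (k : Fin (n+1)) : Fin (n+1) → ℂ := fun j => if j = k then 1 else 0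

/-- The group G^c ≅ O(1,n)(ℝ)^↑, realized as complex-linear maps preserving the
bilinear form, preserving V, and positively oriented in time. -/
def isGc (n : ℕ) (g : (Fin (n+1) → ℂ) →ₗ[ℂ] (Fin (n+1) → ℂ)) : Prop :=
  Function.Bijective g ∧ (∀ z w, dotC n (g z) (g w) = dotC n z w) ∧
  (∀ z, memV n z → memV n (g z)) ∧ 0 < ((g (stdC n 0)) 0).re

/-- ξ_u = e₀ + iu for u ∈ ℝⁿ. -/
def xiC (n : ℕ) (u : Fin n → ℝ) : Fin (n+1) → ℂ :=
  Fin.cons 1 (fun j => Complex.I * (u j : ℂ))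

/-- The unit sphere S^{n-1} ⊆ ℝⁿ. -/
def unitSph (n : ℕ) (u : Fin n → ℝ) : Prop := ∑ j, u j ^ 2 = 1

/-- The action of G^c on the sphere S^{n-1}, defined via g ξ_u = j(g,u) ξ_{g.u}. -/
def gact (n : ℕ) (g : (Fin (n+1) → ℂ) →ₗ[ℂ] (Fin (n+1) → ℂ)) (u : Fin n → ℝ) : Fin n → ℝ :=
  fun j => ((g (xiC n u)) j.succ).im / ((g (xiC n u)) 0).re

/-- μ is the rotation-invariant Borel probability measure on S^{n-1} ⊆ ℝⁿ. -/
def IsSphereMeasure (n : ℕ) (μ : Measure (Fin n → ℝ)) : Prop :=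
  IsProbabilityMeasure μ ∧ μ {u | unitSph n u}ᶜ = 0 ∧
  ∀ g : Matrix.orthogonalGroup (Fin n) ℝ,
    μ.map (fun u => (g : Matrix (Fin n) (Fin n) ℝ).mulVec u) = μ

/-- ρ = (n-1)/2 as a complex number. -/
def rhoC (n : ℕ) : ℂ := ((n : ℂ) - 1) / 2

/-- λ_m = √(ρ²−m²) for m ≤ ρ and i√(m²−ρ²) for m ≥ ρ. -/
def lamOf (n : ℕ) (m : ℝ) : ℂ :=
  if m ≤ ((n : ℝ) - 1) / 2 then (Real.sqrt ((((n : ℝ) - 1) / 2) ^ 2 - m ^ 2) : ℂ)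
  else Complex.I * (Real.sqrt (m ^ 2 - (((n : ℝ) - 1) / 2) ^ 2) : ℂ)

/-- The space iV = iℝe₀ ⊕ ℝⁿ. -/
def memiV (n : ℕ) (z : Fin (n+1) → ℂ) : Prop :=
  (z 0).re = 0 ∧ ∀ j, j ≠ 0 → (z j).im = 0

/-- The orbit of a point under G^c. -/
def orbitGc (n : ℕ) (s : Fin (n+1) → ℂ) : Set (Fin (n+1) → ℂ) :=
  {z | ∃ g : (Fin (n+1) → ℂ) →ₗ[ℂ] (Fin (n+1) → ℂ), isGc n g ∧ z = g s}

/-!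
Write `z = x + i y` with `x, y ∈ V`; then `z ∈ Ξ` iff `z · z = 1` and `x` lies in the open
forward cone. On the boundary `x · x = 0` and `x₀ ≥ 0`, so either `x = 0` and `z ∈ iV` is a
de Sitter point, or `x` is a light ray and `p = z - x ∈ iV` satisfies `p · p = 1`, `x · p = 0`.
Boosts and reflections in spatial vectors lie in `G^c` and already act transitively on light rays
and on `dSⁿ`; moreover a light ray `w` with `w_j = 0` is reached from `ξ⁰` by a map fixing `e_j`,
so all pairs `x + p` form the single orbit of `ξ⁰ + e_j`. Conversely `a ξ⁰ + e_j` (`a ≥ 0`) is a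
limit of points of `Ξ`, which is `G^c`-invariant; the two pieces are disjoint because the
`V`-part of `g (ξ⁰ + e_j)` is `g ξ⁰`, whose time coordinate is positive.
-/

open Complex Topology

variable {n : ℕ}

section Form

lemma last_ne_zero (hn : n ≠ 0) : Fin.last n ≠ 0 := fun h => hn (by simpa [Fin.ext_iff] using h)

lemma ne_zero_of_fin_ne_zero {j : Fin (n+1)} (hj : j ≠ 0) : n ≠ 0 := by
  rintro rfl
  exact hj (Fin.ext (by have := j.isLt; omega))

lemma dotC_eq_dotProduct (z w : Fin (n+1) → ℂ) : dotC n z w = z ⬝ᵥ w := rfl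

lemma stdC_eq_single (k : Fin (n+1)) : stdC n k = Pi.single k 1 := by
  ext j; simp [stdC, Pi.single_apply]

lemma dotC_comm (z w : Fin (n+1) → ℂ) : dotC n z w = dotC n w z := dotProduct_comm z w

lemma dotC_add_left (z z' w : Fin (n+1) → ℂ) : dotC n (z + z') w = dotC n z w + dotC n z' w :=
  add_dotProduct z z' w

lemma dotC_add_right (z w w' : Fin (n+1) → ℂ) : dotC n z (w + w') = dotC n z w + dotC n z w' :=
  dotProduct_add z w w'

lemma dotC_sub_left (z z' w : Fin (n+1) → ℂ) : dotC n (z - z') w = dotC n z w - dotC n z' w :=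
  sub_dotProduct z z' w

lemma dotC_sub_right (z w w' : Fin (n+1) → ℂ) : dotC n z (w - w') = dotC n z w - dotC n z w' :=
  dotProduct_sub z w w'

lemma dotC_smul_left (c : ℂ) (z w : Fin (n+1) → ℂ) : dotC n (c • z) w = c * dotC n z w :=
  smul_dotProduct c z w

lemma dotC_smul_right (c : ℂ) (z w : Fin (n+1) → ℂ) : dotC n z (c • w) = c * dotC n z w :=
  dotProduct_smul c z w

lemma dotC_stdC_right (z : Fin (n+1) → ℂ) (k : Fin (n+1)) : dotC n z (stdC n k) = z k := by
  simp [dotC_eq_dotProduct, stdC_eq_single]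

lemma dotC_stdC_left (z : Fin (n+1) → ℂ) (k : Fin (n+1)) : dotC n (stdC n k) z = z k := by
  simp [dotC_eq_dotProduct, stdC_eq_single]

lemma stdC_apply_of_ne {k j : Fin (n+1)} (h : j ≠ k) : stdC n k j = 0 := if_neg h

@[simp] lemma stdC_apply_self (k : Fin (n+1)) : stdC n k k = 1 := if_pos rfl

lemma bijective_of_dotC_map {g : (Fin (n+1) → ℂ) →ₗ[ℂ] (Fin (n+1) → ℂ)}
    (hg : ∀ z w, dotC n (g z) (g w) = dotC n z w) : Function.Bijective g := by
  have hinj : Function.Injective g := by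
    refine (injective_iff_map_eq_zero g).2 fun z hz => funext fun k => ?_
    rw [Pi.zero_apply, ← dotC_stdC_right z k, ← hg, hz]
    simp [dotC_eq_dotProduct]
  exact ⟨hinj, LinearMap.injective_iff_surjective.1 hinj⟩

end Form

section Coordinates

lemma memV_iff_succ (z : Fin (n+1) → ℂ) :
    memV n z ↔ (z 0).im = 0 ∧ ∀ j : Fin n, (z j.succ).re = 0 := by
  simp only [memV, Fin.forall_fin_succ, ne_eq, not_true_eq_false, IsEmpty.forall_iff,
    true_and, Fin.succ_ne_zero, not_false_eq_true, forall_const]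

lemma memiV_iff_succ (z : Fin (n+1) → ℂ) :
    memiV n z ↔ (z 0).re = 0 ∧ ∀ j : Fin n, (z j.succ).im = 0 := by
  simp only [memiV, Fin.forall_fin_succ, ne_eq, not_true_eq_false, IsEmpty.forall_iff,
    true_and, Fin.succ_ne_zero, not_false_eq_true, forall_const]

lemma memV.add {z w : Fin (n+1) → ℂ} (hz : memV n z) (hw : memV n w) : memV n (z + w) :=
  ⟨by simp [hz.1, hw.1], fun j hj => by simp [hz.2 j hj, hw.2 j hj]⟩

lemma memV.sub {z w : Fin (n+1) → ℂ} (hz : memV n z) (hw : memV n w) : memV n (z - w) :=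
  ⟨by simp [hz.1, hw.1], fun j hj => by simp [hz.2 j hj, hw.2 j hj]⟩

lemma memV.smul {c : ℂ} (hc : c.im = 0) {z : Fin (n+1) → ℂ} (hz : memV n z) :
    memV n (c • z) :=
  ⟨by simp [hc, hz.1], fun j hj => by simp [hc, hz.2 j hj]⟩

lemma memiV.sub {z w : Fin (n+1) → ℂ} (hz : memiV n z) (hw : memiV n w) : memiV n (z - w) :=
  ⟨by simp [hz.1, hw.1], fun j hj => by simp [hz.2 j hj, hw.2 j hj]⟩

lemma memiV.neg_I_smul {z : Fin (n+1) → ℂ} (hz : memiV n z) : memV n (-I • z) :=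
  ⟨by simp [hz.1], fun j hj => by simp [hz.2 j hj]⟩

lemma memV.I_smul {z : Fin (n+1) → ℂ} (hz : memV n z) : memiV n (I • z) :=
  ⟨by simp [hz.1], fun j hj => by simp [hz.2 j hj]⟩

lemma memV_stdC_zero : memV n (stdC n 0) :=
  ⟨by simp, fun j hj => by simp [stdC_apply_of_ne hj]⟩

lemma memiV_stdC {k : Fin (n+1)} (hk : k ≠ 0) : memiV n (stdC n k) :=
  ⟨by simp [stdC_apply_of_ne hk.symm], fun j _ => by by_cases h : j = k <;> simp [stdC, h]⟩

lemma re_dotC_of_memV {z w : Fin (n+1) → ℂ} (hz : memV n z) (hw : memV n w) :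
    (dotC n z w).re = (z 0).re * (w 0).re - ∑ j : Fin n, (z j.succ).im * (w j.succ).im := by
  rw [memV_iff_succ] at hz hw
  simp [dotC, Fin.sum_univ_succ, Complex.re_sum, hz.1, hw.1, hz.2, hw.2, sub_eq_add_neg]

lemma re_dotC_self_le_of_memV {x : Fin (n+1) → ℂ} (hx : memV n x) :
    (dotC n x x).re ≤ (x 0).re * (x 0).re := by
  rw [re_dotC_of_memV hx hx]
  linarith [Finset.sum_nonneg fun j (_ : j ∈ Finset.univ) => mul_self_nonneg (x (Fin.succ j)).im]

lemma im_dotC_of_memV {z w : Fin (n+1) → ℂ} (hz : memV n z) (hw : memV n w) :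
    (dotC n z w).im = 0 := by
  rw [memV_iff_succ] at hz hw
  simp [dotC, Fin.sum_univ_succ, Complex.im_sum, hz.1, hw.1, hz.2, hw.2]

lemma im_dotC_of_memiV {z w : Fin (n+1) → ℂ} (hz : memiV n z) (hw : memiV n w) :
    (dotC n z w).im = 0 := by
  rw [memiV_iff_succ] at hz hw
  simp [dotC, Fin.sum_univ_succ, Complex.im_sum, hz.1, hw.1, hz.2, hw.2]

lemma re_dotC_of_memV_memiV {z w : Fin (n+1) → ℂ} (hz : memV n z) (hw : memiV n w) :
    (dotC n z w).re = 0 := by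
  rw [memV_iff_succ] at hz; rw [memiV_iff_succ] at hw
  simp [dotC, Fin.sum_univ_succ, Complex.re_sum, hz.1, hw.1, hz.2, hw.2]

lemma eq_zero_of_memV_of_dotC_self {a : Fin (n+1) → ℂ} (ha : memV n a) (ha0 : a 0 = 0)
    (h : dotC n a a = 0) : a = 0 := by
  have hsum := re_dotC_of_memV ha ha
  rw [h, ha0] at hsum
  have him : ∀ j : Fin n, (a j.succ).im = 0 := fun j => by
    have := (Finset.sum_eq_zero_iff_of_nonneg fun i _ => mul_self_nonneg (a i.succ).im).1
      (by simpa using hsum.symm) j (Finset.mem_univ j)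
    exact mul_self_eq_zero.1 this
  funext j
  refine Fin.cases ha0 (fun j => Complex.ext ((memV_iff_succ a).1 ha |>.2 j) (him j)) j

lemma eq_zero_of_memiV_of_dotC_self {a : Fin (n+1) → ℂ} (ha : memiV n a) (ha0 : a 0 = 0)
    (h : dotC n a a = 0) : a = 0 := by
  have := eq_zero_of_memV_of_dotC_self ha.neg_I_smul (by simp [ha0])
    (by rw [dotC_smul_left, dotC_smul_right, h, mul_zero, mul_zero])
  simpa using this

end Coordinates

section Decomposition

/-- The `V`-component `x` of the decomposition `z = x + i y` with `x, y ∈ V`. -/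
def reV (z : Fin (n+1) → ℂ) : Fin (n+1) → ℂ :=
  fun j => if j = 0 then ((z 0).re : ℂ) else I * ((z j).im : ℂ)

@[simp] lemma reV_apply_zero (z : Fin (n+1) → ℂ) : reV z 0 = (z 0).re := if_pos rfl

lemma memV_reV (z : Fin (n+1) → ℂ) : memV n (reV z) :=
  ⟨by simp, fun j hj => by simp [reV, hj]⟩

lemma memiV_sub_reV (z : Fin (n+1) → ℂ) : memiV n (z - reV z) :=
  ⟨by simp, fun j hj => by simp [reV, hj]⟩

lemma reV_add_I_smul_neg_I_smul (z : Fin (n+1) → ℂ) :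
    reV z + I • (-I • (z - reV z)) = z := by
  simp [smul_smul]

lemma reV_add_I_smul {x y : Fin (n+1) → ℂ} (hx : memV n x) (hy : memV n y) :
    reV (x + I • y) = x := by
  funext j
  by_cases hj : j = 0
  · subst hj
    exact Complex.ext (by simp [hy.1]) (by simp [hx.1])
  · exact Complex.ext (by simp [reV, hj, hx.2 j hj]) (by simp [reV, hj, hy.2 j hj])

lemma reV_eq_self {z : Fin (n+1) → ℂ} (hz : memV n z) : reV z = z := by
  funext j
  by_cases hj : j = 0
  · subst hj
    exact Complex.ext (by simp) (by simp [hz.1])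
  · exact Complex.ext (by simp [reV, hj, hz.2 j hj]) (by simp [reV, hj])

lemma memTV_iff_memVplus_reV (z : Fin (n+1) → ℂ) : memTV n z ↔ memVplus n (reV z) := by
  constructor
  · rintro ⟨x, y, hx, hy, rfl⟩
    rwa [reV_add_I_smul hx.1 hy]
  · intro h
    exact ⟨_, _, h, (memiV_sub_reV z).neg_I_smul, (reV_add_I_smul_neg_I_smul z).symm⟩

end Decomposition

/-- By Cauchy–Schwarz `|∑ u w| ≤ a |b|`, so `b ≤ 0` would force `a b - ∑ u w ≤ 0`. -/
lemma pos_of_lorentz_pos {a b : ℝ} {u w : Fin n → ℝ} (ha : 0 < a)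
    (hu : ∑ j, u j * u j ≤ a * a) (hw : ∑ j, w j * w j ≤ b * b)
    (h : 0 < a * b - ∑ j, u j * w j) : 0 < b := by
  by_contra! hb
  have hcs := Finset.sum_mul_sq_le_sq_mul_sq Finset.univ u w
  simp only [sq] at hcs
  have hu0 : 0 ≤ ∑ j, u j * u j := Finset.sum_nonneg fun j _ => mul_self_nonneg _
  have hw0 : 0 ≤ ∑ j, w j * w j := Finset.sum_nonneg fun j _ => mul_self_nonneg _
  have hab : a * b ≤ 0 := mul_nonpos_of_nonneg_of_nonpos ha.le hb
  nlinarith [mul_le_mul hu hw hw0 (mul_self_nonneg a)]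

section Group

variable {g h : (Fin (n+1) → ℂ) →ₗ[ℂ] (Fin (n+1) → ℂ)}

lemma isGc_of_dotC (hform : ∀ z w, dotC n (g z) (g w) = dotC n z w)
    (hV : ∀ z, memV n z → memV n (g z)) (hpos : 0 < (g (stdC n 0) 0).re) : isGc n g :=
  ⟨bijective_of_dotC_map hform, hform, hV, hpos⟩

lemma isGc.dotC_apply (hg : isGc n g) (z w : Fin (n+1) → ℂ) :
    dotC n (g z) (g w) = dotC n z w :=
  hg.2.1 z w

lemma isGc.memV_apply (hg : isGc n g) {z : Fin (n+1) → ℂ} (hz : memV n z) : memV n (g z) :=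
  hg.2.2.1 z hz

lemma isGc.memiV_apply (hg : isGc n g) {z : Fin (n+1) → ℂ} (hz : memiV n z) :
    memiV n (g z) := by
  have : g z = I • g (-I • z) := by simp [smul_smul]
  exact this ▸ (hg.memV_apply hz.neg_I_smul).I_smul

lemma isGc.reV_apply (hg : isGc n g) (z : Fin (n+1) → ℂ) : reV (g z) = g (reV z) := by
  conv_lhs => rw [← reV_add_I_smul_neg_I_smul z]
  rw [map_add, map_smul, reV_add_I_smul (hg.memV_apply (memV_reV z))
    (hg.memV_apply (memiV_sub_reV z).neg_I_smul)]

/-- `g e₀` is future-pointing and `(g e₀) · (g x) = x₀ > 0`. -/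
lemma isGc.re_apply_zero_pos (hg : isGc n g) {x : Fin (n+1) → ℂ} (hx : memV n x)
    (hxx : 0 ≤ (dotC n x x).re) (hx0 : 0 < (x 0).re) : 0 < (g x 0).re := by
  have hu := hg.memV_apply memV_stdC_zero
  have hw := hg.memV_apply hx
  have huu := re_dotC_of_memV hu hu
  have hww := re_dotC_of_memV hw hw
  have huw := re_dotC_of_memV hu hw
  rw [hg.dotC_apply, dotC_stdC_left, show (stdC n 0 0).re = 1 by simp] at huu
  rw [hg.dotC_apply] at hww
  rw [hg.dotC_apply, dotC_stdC_left] at huw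
  exact pos_of_lorentz_pos (u := fun j => (g (stdC n 0) j.succ).im) (w := fun j => (g x j.succ).im)
    hg.2.2.2 (by linarith) (by linarith) (by linarith)

lemma isGc.memLn_apply (hg : isGc n g) {v : Fin (n+1) → ℂ} (hv : memLn n v) :
    memLn n (g v) :=
  ⟨hg.memV_apply hv.1, by rw [hg.dotC_apply, hv.2.1],
    hg.re_apply_zero_pos hv.1 (by rw [hv.2.1]; rfl) hv.2.2⟩

lemma isGc.comp (hg : isGc n g) (hh : isGc n h) : isGc n (g ∘ₗ h) :=
  isGc_of_dotC (fun z w => by simp [hg.dotC_apply, hh.dotC_apply])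
    (fun z hz => hg.memV_apply (hh.memV_apply hz))
    (hg.re_apply_zero_pos (hh.memV_apply memV_stdC_zero)
      (by rw [hh.dotC_apply, dotC_stdC_left]; simp) hh.2.2.2)

/-- The inverse preserves `V` because the decomposition `z = x + i y` with `x, y ∈ V` is unique,
and it is orthochronous because `g` maps the forward cone into itself. -/
lemma isGc.exists_inverse (hg : isGc n g) :
    ∃ h : (Fin (n+1) → ℂ) →ₗ[ℂ] (Fin (n+1) → ℂ), isGc n h ∧
      (∀ z, h (g z) = z) ∧ ∀ z, g (h z) = z := by
  set e := LinearEquiv.ofBijective g hg.1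
  have hge : ∀ v, g (e.symm v) = v := e.apply_symm_apply
  have hform : ∀ z w, dotC n (e.symm z) (e.symm w) = dotC n z w := fun z w => by
    rw [← hg.dotC_apply, hge, hge]
  have hV : ∀ z, memV n z → memV n (e.symm z) := fun z hz => by
    have : g (reV (e.symm z)) = g (e.symm z) := by
      rw [← hg.reV_apply, hge, reV_eq_self hz]
    exact hg.1.1 this ▸ memV_reV _
  refine ⟨e.symm.toLinearMap, isGc_of_dotC hform hV ?_, e.symm_apply_apply, e.apply_symm_apply⟩
  set v := e.symm (stdC n 0)
  have hv := hV _ memV_stdC_zero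
  have hvv := re_dotC_of_memV hv hv
  rw [hform, dotC_stdC_left, show (stdC n 0 0).re = 1 by simp] at hvv
  have hsq : 0 ≤ ∑ j : Fin n, (v j.succ).im * (v j.succ).im :=
    Finset.sum_nonneg fun j _ => mul_self_nonneg _
  by_contra! hneg
  have hv0 : (v 0).re < 0 := lt_of_le_of_ne hneg fun h => by nlinarith
  have := hg.re_apply_zero_pos (hv.smul (c := -1) (by simp))
    (by rw [dotC_smul_left, dotC_smul_right, hform, dotC_stdC_left]; simp) (by simpa)
  norm_num [hge] at this

end Group

section Reflection

/-- The reflection in the hyperplane orthogonal to `a`; since `x / 0 = 0`, it is the identity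
when `a` is isotropic. -/
def reflect (a : Fin (n+1) → ℂ) : (Fin (n+1) → ℂ) →ₗ[ℂ] (Fin (n+1) → ℂ) where
  toFun z := z - (2 * dotC n a z / dotC n a a) • a
  map_add' z w := by
    simp only [dotC_add_right, mul_add, add_div, add_smul]
    abel
  map_smul' c z := by
    simp only [dotC_smul_right, RingHom.id_apply, smul_sub, smul_smul]
    congr 2
    ring

lemma reflect_apply (a z : Fin (n+1) → ℂ) :
    reflect a z = z - (2 * dotC n a z / dotC n a a) • a := rfl

lemma dotC_reflect (a z w : Fin (n+1) → ℂ) :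
    dotC n (reflect a z) (reflect a w) = dotC n z w := by
  simp only [reflect_apply, dotC_sub_left, dotC_sub_right, dotC_smul_left, dotC_smul_right,
    dotC_comm z a]
  by_cases ha : dotC n a a = 0
  · simp [ha]
  · field_simp
    ring

lemma reflect_apply_of_dotC_eq_zero {a z : Fin (n+1) → ℂ} (h : dotC n a z = 0) :
    reflect a z = z := by
  simp [reflect_apply, h]

/-- `u - v` is orthogonal to `u + v` when `u · u = v · v`, so the reflection in `u - v`
swaps `u` and `v`. -/
lemma reflect_sub_apply_self {u v : Fin (n+1) → ℂ} (huv : dotC n u u = dotC n v v)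
    (h : dotC n (u - v) (u - v) = 0 → u = v) : reflect (u - v) u = v := by
  by_cases h0 : dotC n (u - v) (u - v) = 0
  · obtain rfl := h h0
    simp [reflect_apply]
  · have : 2 * dotC n (u - v) u = dotC n (u - v) (u - v) := by
      simp only [dotC_sub_left, dotC_sub_right, dotC_comm v u]
      linear_combination huv
    rw [reflect_apply, this, div_self h0, one_smul, sub_sub_cancel]

lemma reflect_smul {c : ℂ} (hc : c ≠ 0) (a : Fin (n+1) → ℂ) : reflect (c • a) = reflect a := by
  refine LinearMap.ext fun z => ?_
  rw [reflect_apply, reflect_apply]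
  simp only [dotC_smul_left, dotC_smul_right, smul_smul]
  by_cases ha : dotC n a a = 0
  · simp [ha]
  · congr 2
    field_simp

lemma isGc_reflect {a : Fin (n+1) → ℂ} (ha : memV n a) (ha0 : a 0 = 0) : isGc n (reflect a) := by
  refine isGc_of_dotC (dotC_reflect a) (fun z hz => ?_) (by simp [reflect_apply, ha0])
  refine hz.sub (ha.smul ?_)
  rw [Complex.div_im]
  simp [im_dotC_of_memV ha hz, im_dotC_of_memV ha ha]

lemma isGc_reflect_of_memiV {a : Fin (n+1) → ℂ} (ha : memiV n a) (ha0 : a 0 = 0) :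
    isGc n (reflect a) := by
  rw [← reflect_smul (neg_ne_zero.2 I_ne_zero)]
  exact isGc_reflect ha.neg_I_smul (by simp [ha0])

lemma reflect_sub_apply_self_of_memV {u v : Fin (n+1) → ℂ} (h : memV n (u - v))
    (h0 : (u - v) 0 = 0) (huv : dotC n u u = dotC n v v) : reflect (u - v) u = v :=
  reflect_sub_apply_self huv fun h' => sub_eq_zero.1 (eq_zero_of_memV_of_dotC_self h h0 h')

lemma reflect_sub_apply_self_of_memiV {u v : Fin (n+1) → ℂ} (h : memiV n (u - v))
    (h0 : (u - v) 0 = 0) (huv : dotC n u u = dotC n v v) : reflect (u - v) u = v :=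
  reflect_sub_apply_self huv fun h' => sub_eq_zero.1 (eq_zero_of_memiV_of_dotC_self h h0 h')

end Reflection

def xiZero (n : ℕ) : Fin (n+1) → ℂ := stdC n 0 + I • stdC n (Fin.last n)

section Boost

/-- The hyperbolic rotation by `s` in the plane of `e₀` and `i e_n`. -/
def boost (n : ℕ) (s : ℝ) : (Fin (n+1) → ℂ) →ₗ[ℂ] (Fin (n+1) → ℂ) where
  toFun z := z + ((Real.cosh s - 1) * z 0 - I * Real.sinh s * z (Fin.last n)) • stdC n 0
    + (I * Real.sinh s * z 0 + (Real.cosh s - 1) * z (Fin.last n)) • stdC n (Fin.last n)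
  map_add' z w := by
    simp only [Pi.add_apply]
    module
  map_smul' c z := by
    simp only [Pi.smul_apply, smul_eq_mul, RingHom.id_apply]
    module

lemma boost_apply (s : ℝ) (z : Fin (n+1) → ℂ) :
    boost n s z = z + ((Real.cosh s - 1) * z 0 - I * Real.sinh s * z (Fin.last n)) • stdC n 0
      + (I * Real.sinh s * z 0 + (Real.cosh s - 1) * z (Fin.last n)) • stdC n (Fin.last n) :=
  rfl

lemma boost_stdC_of_ne {j : Fin (n+1)} (hj0 : j ≠ 0) (hjl : j ≠ Fin.last n) (s : ℝ) :
    boost n s (stdC n j) = stdC n j := by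
  simp [boost_apply, stdC_apply_of_ne hj0.symm, stdC_apply_of_ne hjl.symm]

variable (hn : n ≠ 0)
include hn

lemma dotC_boost (s : ℝ) (z w : Fin (n+1) → ℂ) :
    dotC n (boost n s z) (boost n s w) = dotC n z w := by
  have hcs : (Real.cosh s : ℂ) ^ 2 - (Real.sinh s : ℂ) ^ 2 = 1 := by
    exact_mod_cast Real.cosh_sq_sub_sinh_sq s
  have h0l := (last_ne_zero hn).symm
  simp only [boost_apply, dotC_add_left, dotC_add_right, dotC_smul_left, dotC_smul_right,
    dotC_stdC_left, dotC_stdC_right, Pi.add_apply, Pi.smul_apply, smul_eq_mul, stdC_apply_self,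
    stdC_apply_of_ne h0l, stdC_apply_of_ne h0l.symm]
  linear_combination (z 0 * w 0 + z (Fin.last n) * w (Fin.last n)) *
    (hcs + (Real.sinh s : ℂ) ^ 2 * I_sq)

lemma isGc_boost (s : ℝ) : isGc n (boost n s) := by
  have hl0 := last_ne_zero hn
  refine isGc_of_dotC (dotC_boost hn s) (fun z hz => ?_) ?_
  · have h0 := hz.1
    have hl := hz.2 _ hl0
    refine (hz.add (memV_stdC_zero.smul ?_)).add ⟨?_, fun j hj => ?_⟩
    · simp [Complex.mul_im, h0, hl]
    · simp [stdC_apply_of_ne hl0.symm]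
    · by_cases hjl : j = Fin.last n
      · subst hjl
        simp [Complex.mul_re, h0, hl]
      · simp [stdC_apply_of_ne hjl]
  · simp [boost_apply, stdC_apply_of_ne hl0, stdC_apply_of_ne hl0.symm, Real.cosh_pos]

lemma boost_stdC_last_apply_zero (s : ℝ) :
    boost n s (stdC n (Fin.last n)) 0 = -(I * Real.sinh s) := by
  have hl0 := last_ne_zero hn
  simp [boost_apply, stdC_apply_of_ne hl0.symm]

lemma boost_xiZero (s : ℝ) : boost n s (xiZero n) = (Real.exp s : ℂ) • xiZero n := by
  have hl0 := last_ne_zero hn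
  have hexp : (Real.exp s : ℂ) = Real.cosh s + Real.sinh s := by
    rw [← Real.cosh_add_sinh s]; push_cast; ring
  simp only [boost_apply, xiZero, Pi.add_apply, Pi.smul_apply, smul_eq_mul, stdC_apply_self,
    stdC_apply_of_ne hl0, stdC_apply_of_ne hl0.symm, hexp]
  linear_combination (norm := module) I_sq • (-(Real.sinh s : ℂ) • stdC n 0)

end Boost

section LightRay

lemma xiZero_apply_of_ne {j : Fin (n+1)} (hj0 : j ≠ 0) (hjl : j ≠ Fin.last n) : xiZero n j = 0 := by
  simp [xiZero, stdC_apply_of_ne hj0, stdC_apply_of_ne hjl]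

variable (hn : n ≠ 0)
include hn

lemma xiZero_apply_zero : xiZero n 0 = 1 := by
  simp [xiZero, stdC_apply_of_ne (last_ne_zero hn).symm]

lemma dotC_xiZero_self : dotC n (xiZero n) (xiZero n) = 0 := by
  have hl0 := last_ne_zero hn
  simp only [xiZero, dotC_add_left, dotC_add_right, dotC_smul_left, dotC_smul_right,
    dotC_stdC_left, stdC_apply_self, stdC_apply_of_ne hl0, stdC_apply_of_ne hl0.symm]
  linear_combination I_sq

lemma memLn_xiZero : memLn n (xiZero n) := by
  refine ⟨⟨by simp [xiZero_apply_zero hn], fun j hj => ?_⟩, dotC_xiZero_self hn,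
    by simp [xiZero_apply_zero hn]⟩
  by_cases hjl : j = Fin.last n
  · simp [xiZero, hjl, stdC_apply_of_ne (last_ne_zero hn)]
  · simp [xiZero_apply_of_ne hj hjl]

end LightRay

section Transitivity

variable {j : Fin (n+1)}

/-- Boost `ξ⁰` to `w₀ ξ⁰`, then reflect in the spatial vector `w₀ ξ⁰ - w`. -/
lemma exists_isGc_apply_xiZero (hn : n ≠ 0) {w : Fin (n+1) → ℂ} (hw : memLn n w) :
    ∃ k : (Fin (n+1) → ℂ) →ₗ[ℂ] (Fin (n+1) → ℂ), isGc n k ∧ k (xiZero n) = w ∧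
      ∀ j, j ≠ 0 → j ≠ Fin.last n → w j = 0 → k (stdC n j) = stdC n j := by
  have hB := isGc_boost hn (Real.log (w 0).re)
  set v := ((w 0).re : ℂ) • xiZero n with hv_def
  have hBv : boost n (Real.log (w 0).re) (xiZero n) = v := by
    rw [boost_xiZero hn, Real.exp_log hw.2.2]
  have hv : memLn n v := hBv ▸ hB.memLn_apply (memLn_xiZero hn)
  have hvw0 : (v - w) 0 = 0 := by
    rw [Pi.sub_apply, hv_def, Pi.smul_apply, xiZero_apply_zero hn, smul_eq_mul, mul_one,
      sub_eq_zero]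
    exact Complex.ext rfl (by simp [hw.1.1])
  refine ⟨reflect (v - w) ∘ₗ boost n (Real.log (w 0).re),
    (isGc_reflect (hv.1.sub hw.1) hvw0).comp hB, ?_, ?_⟩
  · rw [LinearMap.comp_apply, hBv]
    exact reflect_sub_apply_self_of_memV (hv.1.sub hw.1) hvw0 (hv.2.1.trans hw.2.1.symm)
  · intro j hj0 hjl hwj
    rw [LinearMap.comp_apply, boost_stdC_of_ne hj0 hjl]
    refine reflect_apply_of_dotC_eq_zero ?_
    simp [dotC_stdC_right, hwj, hv_def, xiZero_apply_of_ne hj0 hjl]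

/-- Move `e_j` to `e_n`, boost `e_n` to the right time coordinate, then reflect in a spatial
vector. -/
lemma exists_isGc_apply_stdC (hj : j ≠ 0) {p : Fin (n+1) → ℂ} (hp : memiV n p)
    (hpp : dotC n p p = 1) :
    ∃ g : (Fin (n+1) → ℂ) →ₗ[ℂ] (Fin (n+1) → ℂ), isGc n g ∧ g (stdC n j) = p := by
  have hn := ne_zero_of_fin_ne_zero hj
  have hl0 := last_ne_zero hn
  have hjl0 : (stdC n j - stdC n (Fin.last n)) 0 = 0 := by
    simp [stdC_apply_of_ne hj.symm, stdC_apply_of_ne hl0.symm]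
  have hjl : memiV n (stdC n j - stdC n (Fin.last n)) := (memiV_stdC hj).sub (memiV_stdC hl0)
  set B := boost n (Real.arsinh (-(p 0).im))
  have hB := isGc_boost hn (Real.arsinh (-(p 0).im))
  set q := B (stdC n (Fin.last n)) with hq_def
  have hq : memiV n q := hB.memiV_apply (memiV_stdC hl0)
  have hqp0 : (q - p) 0 = 0 := by
    rw [Pi.sub_apply, hq_def, boost_stdC_last_apply_zero hn, Real.sinh_arsinh, sub_eq_zero]
    exact Complex.ext (by simp [hp.1]) (by simp)
  have hqq : dotC n q q = dotC n p p := by rw [hB.dotC_apply, dotC_stdC_left, hpp]; simp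
  refine ⟨reflect (q - p) ∘ₗ B ∘ₗ reflect (stdC n j - stdC n (Fin.last n)),
    (isGc_reflect_of_memiV (hq.sub hp) hqp0).comp (hB.comp (isGc_reflect_of_memiV hjl hjl0)), ?_⟩
  rw [LinearMap.comp_apply, LinearMap.comp_apply,
    reflect_sub_apply_self_of_memiV hjl hjl0 (by simp [dotC_stdC_left])]
  exact reflect_sub_apply_self_of_memiV (hq.sub hp) hqp0 hqq

end Transitivity

def Xi (n : ℕ) : Set (Fin (n+1) → ℂ) := {z | memXi n z}

def deSitter (n : ℕ) : Set (Fin (n+1) → ℂ) := {z | dotC n z z = 1 ∧ memiV n z}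

section Orbits

variable {j : Fin (n+1)}

lemma setOf_memLn_eq_orbitGc (hn : n ≠ 0) : {v | memLn n v} = orbitGc n (xiZero n) := by
  ext v
  constructor
  · intro hv
    obtain ⟨k, hk, hkv, -⟩ := exists_isGc_apply_xiZero hn hv
    exact ⟨k, hk, hkv.symm⟩
  · rintro ⟨g, hg, rfl⟩
    exact hg.memLn_apply (memLn_xiZero hn)

lemma deSitter_eq_orbitGc (hj : j ≠ 0) : deSitter n = orbitGc n (stdC n j) := by
  ext p
  constructor
  · rintro ⟨hpp, hp⟩
    obtain ⟨g, hg, hgp⟩ := exists_isGc_apply_stdC hj hp hpp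
    exact ⟨g, hg, hgp.symm⟩
  · rintro ⟨g, hg, rfl⟩
    exact ⟨by rw [hg.dotC_apply, dotC_stdC_left, stdC_apply_self], hg.memiV_apply (memiV_stdC hj)⟩

/-- Move `p` to `e_j` by some `g⁻¹`; the image of `x` is then a light ray orthogonal to `e_j`,
which a transformation fixing `e_j` moves to `ξ⁰`. -/
lemma add_mem_orbitGc (hj0 : j ≠ 0) (hjl : j ≠ Fin.last n) {x p : Fin (n+1) → ℂ}
    (hx : memLn n x) (hp : p ∈ deSitter n) (hxp : dotC n x p = 0) :
    x + p ∈ orbitGc n (xiZero n + stdC n j) := by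
  have hn := ne_zero_of_fin_ne_zero hj0
  obtain ⟨g, hg, hgj⟩ := exists_isGc_apply_stdC hj0 hp.2 hp.1
  obtain ⟨h, hh, hhg, hgh⟩ := hg.exists_inverse
  have hwj : h x j = 0 := by
    rw [← dotC_stdC_right (h x) j, ← hhg (stdC n j), hgj, hh.dotC_apply, hxp]
  obtain ⟨k, hk, hkx, hkj⟩ := exists_isGc_apply_xiZero hn (hh.memLn_apply hx)
  refine ⟨g ∘ₗ k, hg.comp hk, ?_⟩
  rw [LinearMap.comp_apply, map_add, hkx, hkj j hj0 hjl hwj, map_add, hgh, hgj]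

end Orbits

section Boundary

variable {g : (Fin (n+1) → ℂ) →ₗ[ℂ] (Fin (n+1) → ℂ)} {j : Fin (n+1)}

lemma mem_Xi_iff (z : Fin (n+1) → ℂ) : z ∈ Xi n ↔ memVplus n (reV z) ∧ dotC n z z = 1 :=
  and_congr_left' (memTV_iff_memVplus_reV z)

lemma isGc.mapsTo_Xi (hg : isGc n g) : Set.MapsTo g (Xi n) (Xi n) := by
  intro z hz
  rw [mem_Xi_iff] at hz ⊢
  rw [hg.reV_apply, hg.dotC_apply]
  obtain ⟨⟨hx, hx0, hxx⟩, hzz⟩ := hz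
  exact ⟨⟨hg.memV_apply hx, hg.re_apply_zero_pos hx hxx.le hx0, by rwa [hg.dotC_apply]⟩, hzz⟩

lemma isGc.mapsTo_closure_Xi (hg : isGc n g) : Set.MapsTo g (closure (Xi n)) (closure (Xi n)) :=
  hg.mapsTo_Xi.closure g.continuous_of_finiteDimensional

lemma continuous_reV : Continuous (reV : (Fin (n+1) → ℂ) → Fin (n+1) → ℂ) :=
  continuous_pi fun j => by
    unfold reV
    split_ifs <;> fun_prop

lemma closure_Xi_subset :
    closure (Xi n) ⊆
      {z | dotC n z z = 1 ∧ 0 ≤ (z 0).re ∧ 0 ≤ (dotC n (reV z) (reV z)).re} := by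
  have hdot : Continuous fun z : Fin (n+1) → ℂ => dotC n z z := by
    unfold dotC
    fun_prop
  refine closure_minimal (fun z hz => ?_) ?_
  · obtain ⟨⟨-, hx0, hxx⟩, hzz⟩ := (mem_Xi_iff z).1 hz
    exact ⟨hzz, by simpa using hx0.le, hxx.le⟩
  · simp only [Set.ofPred_and]
    exact (isClosed_eq hdot continuous_const).inter
      ((isClosed_le continuous_const (Complex.continuous_re.comp (continuous_apply 0))).inter
        (isClosed_le continuous_const ((Complex.continuous_re.comp hdot).comp continuous_reV)))

/-- The curve `t ↦ (a ξ⁰ + t e₀) + √(1 - 2at - t²) e_j` lies in `Ξ` for small `t > 0`. -/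
lemma smul_xiZero_add_stdC_mem_closure_Xi (hj0 : j ≠ 0) (hjl : j ≠ Fin.last n) {a : ℝ}
    (ha : 0 ≤ a) : (a : ℂ) • xiZero n + stdC n j ∈ closure (Xi n) := by
  have hn := ne_zero_of_fin_ne_zero hj0
  set f : ℝ → Fin (n+1) → ℂ := fun t =>
    ((a : ℂ) • xiZero n + (t : ℂ) • stdC n 0) + (Real.sqrt (1 - 2 * a * t - t ^ 2) : ℂ) • stdC n j
  have hf0 : f 0 = (a : ℂ) • xiZero n + stdC n j := by simp [f]
  have hlim : Filter.Tendsto f (𝓝[>] 0) (𝓝 (f 0)) :=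
    ((by fun_prop : Continuous f).tendsto 0).mono_left nhdsWithin_le_nhds
  have hsmall : ∀ᶠ t in 𝓝[>] (0 : ℝ), 0 < t ∧ 0 < 1 - 2 * a * t - t ^ 2 :=
    eventually_mem_nhdsWithin.and (nhdsWithin_le_nhds (continuousAt_const.eventually_lt
      (by fun_prop : Continuous fun t : ℝ => 1 - 2 * a * t - t ^ 2).continuousAt (by norm_num)))
  refine hf0 ▸ mem_closure_of_tendsto hlim (hsmall.mono fun t ⟨ht, hc⟩ => ?_)
  set x := (a : ℂ) • xiZero n + (t : ℂ) • stdC n 0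
  set c := Real.sqrt (1 - 2 * a * t - t ^ 2)
  have hx : memV n x := ((memLn_xiZero hn).1.smul (by simp)).add (memV_stdC_zero.smul (by simp))
  have hy : memV n ((c : ℂ) • (-I • stdC n j)) := (memiV_stdC hj0).neg_I_smul.smul (by simp)
  have hft : f t = x + I • ((c : ℂ) • (-I • stdC n j)) := by
    rw [smul_smul, smul_smul, show I * c * -I = (c : ℂ) by linear_combination -(c : ℂ) * I_sq]
  have hxx : dotC n x x = 2 * a * t + t ^ 2 := by
    simp only [x, dotC_add_left, dotC_add_right, dotC_smul_left, dotC_smul_right,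
      dotC_xiZero_self hn, dotC_stdC_left, dotC_stdC_right, Pi.add_apply, Pi.smul_apply, smul_eq_mul,
      xiZero_apply_zero hn, stdC_apply_self]
    ring
  have hxj : dotC n x (stdC n j) = 0 := by
    simp [x, dotC_stdC_right, xiZero_apply_of_ne hj0 hjl, stdC_apply_of_ne hj0]
  have hcc : (c : ℂ) * c = 1 - 2 * a * t - t ^ 2 := by
    rw [← Complex.ofReal_mul, Real.mul_self_sqrt hc.le]
    push_cast; ring
  rw [mem_Xi_iff, hft, reV_add_I_smul hx hy, ← hft]
  refine ⟨⟨hx, ?_, ?_⟩, ?_⟩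
  · have hx0 : (x 0).re = a + t := by simp [x, xiZero_apply_zero hn]
    rw [hx0]
    positivity
  · rw [hxx]
    norm_cast
    positivity
  · change dotC n (x + (c : ℂ) • stdC n j) (x + (c : ℂ) • stdC n j) = 1
    simp only [dotC_add_left, dotC_add_right, dotC_smul_left, dotC_smul_right, hxx, hxj,
      dotC_comm (stdC n j) x, dotC_stdC_left, stdC_apply_self]
    linear_combination hcc

lemma re_apply_zero_pos_of_mem_Xi {z : Fin (n+1) → ℂ} (hz : z ∈ Xi n) : 0 < (z 0).re := by
  simpa using ((mem_Xi_iff z).1 hz).1.2.1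

lemma reV_xiZero_add_stdC (hj : j ≠ 0) : reV (xiZero n + stdC n j) = xiZero n := by
  have hsplit : xiZero n + stdC n j = xiZero n + I • (-I • stdC n j) := by simp [smul_smul]
  rw [hsplit, reV_add_I_smul (memLn_xiZero (ne_zero_of_fin_ne_zero hj)).1
    (memiV_stdC hj).neg_I_smul]

lemma re_apply_zero_pos_of_mem_orbitGc (hj : j ≠ 0) {z : Fin (n+1) → ℂ}
    (hz : z ∈ orbitGc n (xiZero n + stdC n j)) : 0 < (z 0).re := by
  obtain ⟨g, hg, rfl⟩ := hz
  have := (hg.memLn_apply (memLn_xiZero (ne_zero_of_fin_ne_zero hj))).2.2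
  rwa [← reV_xiZero_add_stdC hj, ← hg.reV_apply, reV_apply_zero, ofReal_re] at this

lemma deSitter_inter_orbitGc_eq_empty (hj : j ≠ 0) :
    deSitter n ∩ orbitGc n (xiZero n + stdC n j) = ∅ :=
  Set.eq_empty_of_forall_notMem fun _ ⟨hz, hz'⟩ =>
    (re_apply_zero_pos_of_mem_orbitGc hj hz').ne' hz.2.1

lemma dotC_reV_self_eq_zero {z : Fin (n+1) → ℂ} (hcl : z ∈ closure (Xi n)) (hz : z ∉ Xi n) :
    dotC n (reV z) (reV z) = 0 := by
  obtain ⟨hzz, hz0, hxx⟩ := closure_Xi_subset hcl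
  have hx := memV_reV z
  refine Complex.ext (le_antisymm ?_ hxx) (im_dotC_of_memV hx hx)
  rw [zero_re]
  by_contra! hpos
  refine hz ((mem_Xi_iff z).2 ⟨⟨hx, (by simpa using hz0 : 0 ≤ (reV z 0).re).lt_of_ne fun h => ?_,
    hpos⟩, hzz⟩)
  have hle := re_dotC_self_le_of_memV hx
  rw [← h, mul_zero] at hle
  linarith

/-- Writing `z = x + p` with `x ∈ V`, `p ∈ iV`: either `x = 0`, or `x` is a light ray and
`p ∈ dSⁿ` is orthogonal to it. -/
lemma closure_Xi_diff_Xi_subset (hj0 : j ≠ 0) (hjl : j ≠ Fin.last n) :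
    closure (Xi n) \ Xi n ⊆ deSitter n ∪ orbitGc n (xiZero n + stdC n j) := by
  rintro z ⟨hcl, hnot⟩
  obtain ⟨hzz, hz0, -⟩ := closure_Xi_subset hcl
  have hxx := dotC_reV_self_eq_zero hcl hnot
  set x := reV z
  have hx : memV n x := memV_reV z
  have hx0 : (x 0).re = (z 0).re := by simp [x]
  rcases hz0.eq_or_lt with hz0 | hz0
  · have hx_zero : x = 0 := eq_zero_of_memV_of_dotC_self hx (by simp [x, ← hz0]) hxx
    have hz := memiV_sub_reV z
    rw [show reV z = 0 from hx_zero, sub_zero] at hz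
    exact Or.inl ⟨hzz, hz⟩
  · obtain ⟨p, hp_def⟩ : ∃ p, p = z - x := ⟨_, rfl⟩
    have hp : memiV n p := hp_def ▸ memiV_sub_reV z
    have hz : z = x + p := by rw [hp_def, add_sub_cancel]
    have hsum : dotC n p p + 2 * dotC n x p = 1 := by
      rw [← hzz, hz]
      simp only [dotC_add_left, dotC_add_right, dotC_comm p x, hxx]
      ring
    have hpp : dotC n p p = 1 := by
      refine Complex.ext ?_ (im_dotC_of_memiV hp hp)
      simpa [re_dotC_of_memV_memiV hx hp] using congrArg re hsum
    have hxp : dotC n x p = 0 := by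
      linear_combination hsum / 2 - hpp / 2
    exact Or.inr (hz ▸ add_mem_orbitGc hj0 hjl ⟨hx, hxx, hx0 ▸ hz0⟩ ⟨hpp, hp⟩ hxp)

lemma closure_Xi_diff_Xi (hj0 : j ≠ 0) (hjl : j ≠ Fin.last n) :
    closure (Xi n) \ Xi n = deSitter n ∪ orbitGc n (xiZero n + stdC n j) := by
  refine (closure_Xi_diff_Xi_subset hj0 hjl).antisymm ?_
  rintro z (hz | ⟨g, hg, rfl⟩)
  · obtain ⟨g, hg, rfl⟩ := (deSitter_eq_orbitGc hj0).le hz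
    refine ⟨hg.mapsTo_closure_Xi ?_, fun hXi => (re_apply_zero_pos_of_mem_Xi hXi).ne' hz.2.1⟩
    simpa using smul_xiZero_add_stdC_mem_closure_Xi hj0 hjl le_rfl
  · refine ⟨hg.mapsTo_closure_Xi ?_, fun hXi => ?_⟩
    · simpa using smul_xiZero_add_stdC_mem_closure_Xi hj0 hjl zero_le_one
    · have := ((mem_Xi_iff _).1 hXi).1.2.2
      rw [hg.reV_apply, reV_xiZero_add_stdC hj0, hg.dotC_apply,
        dotC_xiZero_self (ne_zero_of_fin_ne_zero hj0)] at this
      exact this.ne rfl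

end Boundary

/-- Lemma 3.7 and (eq:conic): ∂Ξ = dS^n ∪̇ 𝒪 with 𝒪 = G^c·(ξ⁰ + e_{n−1}),
dS^n = G^c·e_{n−1} and L^n₊ = G^c·ξ⁰, where ξ⁰ = e₀ + i e_n. -/
theorem stmt_7 (n : ℕ) (hn : 2 ≤ n) :
    (closure {z : Fin (n+1) → ℂ | memXi n z} \ {z : Fin (n+1) → ℂ | memXi n z}
      = {z : Fin (n+1) → ℂ | dotC n z z = 1 ∧ memiV n z}
        ∪ orbitGc n ((stdC n 0 + Complex.I • stdC n (Fin.last n)) + stdC n ⟨n - 1, by omega⟩)) ∧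
    ({z : Fin (n+1) → ℂ | dotC n z z = 1 ∧ memiV n z}
        ∩ orbitGc n ((stdC n 0 + Complex.I • stdC n (Fin.last n)) + stdC n ⟨n - 1, by omega⟩)
      = ∅) ∧
    ({z : Fin (n+1) → ℂ | dotC n z z = 1 ∧ memiV n z}
      = orbitGc n (stdC n ⟨n - 1, by omega⟩)) ∧
    ({v : Fin (n+1) → ℂ | memLn n v}
      = orbitGc n (stdC n 0 + Complex.I • stdC n (Fin.last n))) := by
  have hj0 : (⟨n - 1, by omega⟩ : Fin (n+1)) ≠ 0 := by simp [Fin.ext_iff]; omega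
  have hjl : (⟨n - 1, by omega⟩ : Fin (n+1)) ≠ Fin.last n := by simp [Fin.ext_iff]; omega
  exact ⟨closure_Xi_diff_Xi hj0 hjl, deSitter_inter_orbitGc_eq_empty hj0, deSitter_eq_orbitGc hj0,
    setOf_memLn_eq_orbitGc (by omega)⟩
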